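/- arXiv:2105.03508 — 3 statements merged into one kernel-verified Lean document; each statement's English description precedes it below -/
import Mathlib

section
/- Let m ∈ ℕ, let Σ ∈ ℝ^{m×m} be invertible with inverse Ω = Σ⁻¹, and for each i ∈ {1,…,m} let u_i ∈ ℝ^{d_i} be a unit vector (u_iᵀu_i = 1). Define the block matrix R whose (i,j) block is R_{ij} = u_i Σ_{ij} u_jᵀ + δ_{ij}(I − u_i u_iᵀ), where Σ_{ij} is the (i,j) scalar entry of Σ and δ_{ij} is the Kronecker delta. Then R is invertible and its inverse Q has blocks Q_{ij} = u_i Ω_{ij} u_jᵀ + δ_{ij}(I − u_i u_iᵀ). -/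
open Matrix

private def Emb {m : ℕ} {d : Fin m → ℕ} (u : (i : Fin m) → Fin (d i) → ℝ)
    (M : Matrix (Fin m) (Fin m) ℝ) :
    Matrix ((i : Fin m) × Fin (d i)) ((i : Fin m) × Fin (d i)) ℝ :=
  Matrix.of fun p q => u p.1 p.2 * M p.1 q.1 * u q.1 q.2

private lemma Emb_mul {m : ℕ} {d : Fin m → ℕ} (u : (i : Fin m) → Fin (d i) → ℝ)
    (hu : ∀ i, u i ⬝ᵥ u i = 1) (M N : Matrix (Fin m) (Fin m) ℝ) :
    Emb u M * Emb u N = Emb u (M * N) := by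
  ext p q
  simp only [Emb, Matrix.mul_apply, Matrix.of_apply]
  rw [← Finset.univ_sigma_univ, Finset.sum_sigma]
  rw [Finset.mul_sum, Finset.sum_mul]
  refine Finset.sum_congr rfl fun k _ => ?_
  have hk : (∑ b, u k b * u k b) = 1 := hu k
  calc (∑ b : Fin (d k), u p.1 p.2 * M p.1 k * u k b * (u k b * N k q.1 * u q.1 q.2))
      = ∑ b : Fin (d k), (u k b * u k b) * (u p.1 p.2 * M p.1 k * N k q.1 * u q.1 q.2) :=
        Finset.sum_congr rfl fun b _ => by ring
    _ = (∑ b : Fin (d k), u k b * u k b) * (u p.1 p.2 * M p.1 k * N k q.1 * u q.1 q.2) :=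
        (Finset.sum_mul _ _ _).symm
    _ = u p.1 p.2 * M p.1 k * N k q.1 * u q.1 q.2 := by rw [hk, one_mul]
    _ = u p.1 p.2 * (M p.1 k * N k q.1) * u q.1 q.2 := by ring

/-- Block-inversion identity: if `R` has blocks `R_{ij} = u_i Σ_{ij} u_jᵀ + δ_{ij}(I - u_i u_iᵀ)`
with each `u_i` a unit vector and `Σ` invertible with inverse `Ω`, then `R` is invertible
with inverse `Q` having blocks `Q_{ij} = u_i Ω_{ij} u_jᵀ + δ_{ij}(I - u_i u_iᵀ)`. -/
theorem stmt4 {m : ℕ} {d : Fin m → ℕ}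
    (Sig : Matrix (Fin m) (Fin m) ℝ) (hSig : IsUnit Sig.det)
    (u : (i : Fin m) → Fin (d i) → ℝ) (hu : ∀ i, u i ⬝ᵥ u i = 1) :
    let R : Matrix ((i : Fin m) × Fin (d i)) ((i : Fin m) × Fin (d i)) ℝ :=
      Matrix.of fun p q =>
        u p.1 p.2 * Sig p.1 q.1 * u q.1 q.2 + (if p = q then 1 else 0)
          - (if p.1 = q.1 then u p.1 p.2 * u q.1 q.2 else 0)
    let Q : Matrix ((i : Fin m) × Fin (d i)) ((i : Fin m) × Fin (d i)) ℝ :=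
      Matrix.of fun p q =>
        u p.1 p.2 * Sig⁻¹ p.1 q.1 * u q.1 q.2 + (if p = q then 1 else 0)
          - (if p.1 = q.1 then u p.1 p.2 * u q.1 q.2 else 0)
    IsUnit R.det ∧ R⁻¹ = Q := by
  intro R Q
  have hE1 : ∀ (M : Matrix (Fin m) (Fin m) ℝ),
      (Matrix.of fun (p q : (i : Fin m) × Fin (d i)) =>
        u p.1 p.2 * M p.1 q.1 * u q.1 q.2 + (if p = q then 1 else 0)
          - (if p.1 = q.1 then u p.1 p.2 * u q.1 q.2 else 0))
      = Emb u M + 1 - Emb u 1 := by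
    intro M
    ext p q
    simp only [Matrix.of_apply, Emb, Matrix.sub_apply, Matrix.add_apply, Matrix.one_apply]
    split <;> split <;> ring
  have hR : R = Emb u Sig + 1 - Emb u 1 := hE1 Sig
  have hQ : Q = Emb u Sig⁻¹ + 1 - Emb u 1 := hE1 Sig⁻¹
  have hAB : Emb u Sig * Emb u Sig⁻¹ = Emb u 1 := by
    rw [Emb_mul u hu, Matrix.mul_nonsing_inv _ hSig]
  have hAC : Emb u Sig * Emb u 1 = Emb u Sig := by
    rw [Emb_mul u hu, Matrix.mul_one]
  have hCB : Emb u 1 * Emb u Sig⁻¹ = Emb u Sig⁻¹ := by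
    rw [Emb_mul u hu, Matrix.one_mul]
  have hCC : Emb u 1 * Emb u 1 = Emb u 1 := by
    rw [Emb_mul u hu, Matrix.one_mul]
  have key : R * Q = 1 := by
    rw [hR, hQ]
    simp only [Matrix.sub_mul, Matrix.add_mul, Matrix.mul_sub, Matrix.mul_add,
      Matrix.one_mul, Matrix.mul_one, hAB, hAC, hCB, hCC]
    abel
  exact ⟨Matrix.isUnit_det_of_right_inverse key, Matrix.inv_eq_right_inv key⟩
end

section
/- Let m ∈ ℕ, let Σ ∈ ℝ^{m×m} be invertible, and for each i ∈ {1,…,m} let u_i ∈ ℝ^{d_i} be a unit vector. Define the block matrix R with blocks R_{ij} = u_i Σ_{ij} u_jᵀ + δ_{ij}(I − u_i u_iᵀ), where Σ_{ij} is the (i,j) scalar entry of Σ. Then det(R) = det(Σ). -/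
/-!
With `B` the block-diagonal matrix whose `i`-th block is the column `u i`, one has
`R = 1 + B (Σ - 1) Bᵀ` and `Bᵀ B = 1` since the `u i` are unit vectors. Sylvester's identity
`det (1 + X Y) = det (1 + Y X)` then gives `det R = det (1 + (Σ - 1) Bᵀ B) = det Σ`.
-/

open Matrix

namespace Matrix

variable {ι α : Type*} [Fintype ι] [DecidableEq ι] [CommRing α]
  {κ : ι → Type*}

def blockDiagColumns (u : ∀ i, κ i → α) : Matrix (Σ i, κ i) ι α :=
  of fun p j => if p.1 = j then u p.1 p.2 else 0

theorem transpose_blockDiagColumns_mul_self [∀ i, Fintype (κ i)] (u : ∀ i, κ i → α) :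
    (blockDiagColumns u)ᵀ * blockDiagColumns u = diagonal fun i => u i ⬝ᵥ u i := by
  ext i j
  simp only [blockDiagColumns, mul_apply, transpose_apply, of_apply, diagonal_apply,
    ← Finset.univ_sigma_univ, Finset.sum_sigma, dotProduct]
  rcases eq_or_ne i j with rfl | hij
  · simp
  · simp [hij, hij.symm]

theorem blockDiagColumns_mul_mul_transpose_apply (u : ∀ i, κ i → α) (M : Matrix ι ι α)
    (p q : Σ i, κ i) :
    (blockDiagColumns u * M * (blockDiagColumns u)ᵀ) p q = u p.1 p.2 * M p.1 q.1 * u q.1 q.2 := by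
  simp [blockDiagColumns, mul_apply]

theorem det_one_add_mul_mul_of_mul_eq_one {m n : Type*} [Fintype m] [DecidableEq m]
    [Fintype n] [DecidableEq n] {A : Matrix n m α} {B : Matrix m n α} (hAB : A * B = 1)
    (M : Matrix n n α) : (1 + B * M * A).det = (1 + M).det := by
  rw [Matrix.mul_assoc, det_one_add_mul_comm, Matrix.mul_assoc, hAB, Matrix.mul_one]

end Matrix

theorem stmt5_general {m : ℕ} {d : Fin m → ℕ}
    (Sig : Matrix (Fin m) (Fin m) ℝ)
    (u : (i : Fin m) → Fin (d i) → ℝ) (hu : ∀ i, u i ⬝ᵥ u i = 1) :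
    let R : Matrix ((i : Fin m) × Fin (d i)) ((i : Fin m) × Fin (d i)) ℝ :=
      Matrix.of fun p q =>
        u p.1 p.2 * Sig p.1 q.1 * u q.1 q.2 + (if p = q then 1 else 0)
          - (if p.1 = q.1 then u p.1 p.2 * u q.1 q.2 else 0)
    R.det = Sig.det := by
  intro R
  set B := blockDiagColumns u
  have hBtB : Bᵀ * B = 1 := by
    rw [transpose_blockDiagColumns_mul_self, funext hu, diagonal_one]
  have hR : R = 1 + B * (Sig - 1) * Bᵀ := by
    ext p q
    rw [Matrix.add_apply, blockDiagColumns_mul_mul_transpose_apply, Matrix.sub_apply,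
      one_apply, one_apply]
    by_cases h : p.1 = q.1
    · simp only [R, of_apply, if_pos h]
      ring
    · have hpq : p ≠ q := fun hc => h (congrArg Sigma.fst hc)
      simp only [R, of_apply, if_neg h, if_neg hpq]
      ring
  rw [hR, det_one_add_mul_mul_of_mul_eq_one hBtB, add_sub_cancel]

/-- If `R` has blocks `R_{ij} = u_i Σ_{ij} u_jᵀ + δ_{ij}(I - u_i u_iᵀ)` with each `u_i`
a unit vector and `Σ` invertible, then `det R = det Σ`. -/
theorem stmt5 {m : ℕ} {d : Fin m → ℕ}
    (Sig : Matrix (Fin m) (Fin m) ℝ) (hSig : IsUnit Sig.det)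
    (u : (i : Fin m) → Fin (d i) → ℝ) (hu : ∀ i, u i ⬝ᵥ u i = 1) :
    let R : Matrix ((i : Fin m) × Fin (d i)) ((i : Fin m) × Fin (d i)) ℝ :=
      Matrix.of fun p q =>
        u p.1 p.2 * Sig p.1 q.1 * u q.1 q.2 + (if p = q then 1 else 0)
          - (if p.1 = q.1 then u p.1 p.2 * u q.1 q.2 else 0)
    R.det = Sig.det :=
  stmt5_general Sig u hu
end

section
/- Let Σ ∈ ℝ^{m×m} be a symmetric positive definite matrix with all diagonal entries equal to 1, let β_i ∈ ℝ^{d_i} and let Φ_i ∈ ℝ^{d_i×d_i} be symmetric positive semidefinite for i = 1,…,m. Define the block matrix S with blocks S_{ij} = β_i Σ_{ij} β_jᵀ + δ_{ij} Φ_i, and assume each diagonal block S_{ii} = β_iβ_iᵀ + Φ_i is positive definite with β_iᵀ S_{ii}⁻¹ β_i = 1. Then det(S) = det(Σ) · ∏_{i=1}^m det(S_{ii}). -/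
/-!
Write `T i = β_i β_iᵀ + Φ_i` for the diagonal blocks and `B` for the block column whose `i`-th
block is `β_i`. Then `S = diag(T) + B (Σ - 1) Bᵀ`, and the normalisation `β_iᵀ T_i⁻¹ β_i = 1`
says exactly that `Bᵀ diag(T)⁻¹ B = 1`. The generalised matrix determinant lemma
`det (D + U V) = det D · det (1 + V D⁻¹ U)` with `U = B`, `V = (Σ - 1) Bᵀ` therefore gives
`det S = det (diag T) · det Σ = det Σ · ∏ i, det T_i`.
-/

open Matrix

namespace Matrix

variable {ι R : Type*} {κ : ι → Type*} [Fintype ι] [DecidableEq ι] [CommRing R]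

theorem det_add_mul_mul_of_mul_inv_mul_eq_one {n k : Type*} [Fintype n] [DecidableEq n]
    [Fintype k] [DecidableEq k] {D : Matrix n n R} (hD : IsUnit D.det) (B : Matrix n k R)
    (C : Matrix k n R) (A : Matrix k k R) (h : C * D⁻¹ * B = 1) :
    (D + B * A * C).det = D.det * (1 + A).det := by
  rw [Matrix.mul_assoc, det_add_mul _ _ hD, Matrix.mul_assoc, Matrix.mul_assoc,
    ← Matrix.mul_assoc C, h, Matrix.mul_one]

def blockCol (v : ∀ i, κ i → R) : Matrix (Σ i, κ i) ι R :=
  of fun p j => if p.1 = j then v p.1 p.2 else 0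

theorem blockCol_mul_mul_transpose_blockCol (v w : ∀ i, κ i → R) (A : Matrix ι ι R) :
    blockCol v * A * (blockCol w)ᵀ = of fun p q => v p.1 p.2 * A p.1 q.1 * w q.1 q.2 := by
  ext p q
  simp [blockCol, mul_apply, ite_mul, mul_ite]

variable [∀ i, Fintype (κ i)]

theorem transpose_blockCol_mul_blockCol (v w : ∀ i, κ i → R) :
    (blockCol v)ᵀ * blockCol w = diagonal fun i => v i ⬝ᵥ w i := by
  ext i j
  rw [mul_apply, Fintype.sum_sigma, Finset.sum_eq_single i]
  · rcases eq_or_ne i j with rfl | h <;> simp [blockCol, dotProduct, *]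
  · intro a _ hai
    simp [blockCol, hai]
  · simp

theorem blockDiagonal'_mul_blockCol (M : ∀ i, Matrix (κ i) (κ i) R) (w : ∀ i, κ i → R) :
    blockDiagonal' M * blockCol w = blockCol fun i => M i *ᵥ w i := by
  ext ⟨i, k⟩ j
  rw [mul_apply, Fintype.sum_sigma, Finset.sum_eq_single i]
  · simp [blockCol, blockDiagonal'_apply_eq, mulVec, dotProduct, mul_ite]
  · intro a _ hai
    simp [blockDiagonal'_apply_ne M _ _ hai.symm]
  · simp

variable [∀ i, DecidableEq (κ i)]

theorem det_blockDiagonal' (M : ∀ i, Matrix (κ i) (κ i) R) :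
    (blockDiagonal' M).det = ∏ i, (M i).det := by
  let : LinearOrder ι := LinearOrder.lift' _ (Fintype.equivFin ι).injective
  rw [(blockTriangular_blockDiagonal' M).det_fintype]
  refine Finset.prod_congr rfl fun k _ => ?_
  rw [← det_submatrix_equiv_self (Equiv.sigmaSubtype k).symm]
  congr 1
  ext j j'
  simp [toSquareBlock_def, Equiv.sigmaSubtype]

theorem inv_blockDiagonal' (M : ∀ i, Matrix (κ i) (κ i) R) (hM : ∀ i, IsUnit (M i).det) :
    (blockDiagonal' M)⁻¹ = blockDiagonal' fun i => (M i)⁻¹ := by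
  refine inv_eq_right_inv ?_
  rw [← blockDiagonal'_mul]
  simp_rw [mul_nonsing_inv _ (hM _)]
  exact blockDiagonal'_one

end Matrix

theorem of_blocks_eq_blockDiagonal'_add_blockCol_mul {m : ℕ} {d : Fin m → ℕ}
    (Sig : Matrix (Fin m) (Fin m) ℝ) (β : (i : Fin m) → Fin (d i) → ℝ)
    (Φ : (i : Fin m) → Matrix (Fin (d i)) (Fin (d i)) ℝ) :
    (Matrix.of fun (p q : (i : Fin m) × Fin (d i)) =>
        β p.1 p.2 * Sig p.1 q.1 * β q.1 q.2 +
          (if h : p.1 = q.1 then Φ p.1 p.2 (Fin.cast (congrArg d h.symm) q.2) else 0)) =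
      blockDiagonal' (fun i => vecMulVec (β i) (β i) + Φ i) +
        blockCol β * (Sig - 1) * (blockCol β)ᵀ := by
  rw [blockCol_mul_mul_transpose_blockCol]
  ext ⟨i, k⟩ ⟨j, l⟩
  rcases eq_or_ne i j with rfl | h
  · simp only [of_apply, ↓reduceDIte, Fin.cast_eq_self, Matrix.sub_apply, Matrix.add_apply,
      blockDiagonal'_apply_eq, vecMulVec_apply, one_apply_eq]
    ring
  · simp [blockDiagonal'_apply_ne _ _ _ h, h]

theorem stmt6_general {m : ℕ} {d : Fin m → ℕ}
    (Sig : Matrix (Fin m) (Fin m) ℝ)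
    (β : (i : Fin m) → Fin (d i) → ℝ)
    (Φ : (i : Fin m) → Matrix (Fin (d i)) (Fin (d i)) ℝ)
    (hSii : ∀ i, (vecMulVec (β i) (β i) + Φ i).PosDef)
    (hnorm : ∀ i, β i ⬝ᵥ (vecMulVec (β i) (β i) + Φ i)⁻¹ *ᵥ β i = 1) :
    let S : Matrix ((i : Fin m) × Fin (d i)) ((i : Fin m) × Fin (d i)) ℝ :=
      Matrix.of fun p q =>
        β p.1 p.2 * Sig p.1 q.1 * β q.1 q.2 +
          (if h : p.1 = q.1 then Φ p.1 p.2 (Fin.cast (congrArg d h.symm) q.2) else 0)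
    S.det = Sig.det * ∏ i, (vecMulVec (β i) (β i) + Φ i).det := by
  intro S
  set T := fun i => vecMulVec (β i) (β i) + Φ i
  have hT : ∀ i, IsUnit (T i).det := fun i => (hSii i).det_pos.ne'.isUnit
  have hD : IsUnit (blockDiagonal' T).det := by
    rw [det_blockDiagonal']
    exact IsUnit.prod_univ_iff.mpr hT
  have hBDB : (blockCol β)ᵀ * (blockDiagonal' T)⁻¹ * blockCol β = 1 := by
    rw [inv_blockDiagonal' _ hT, Matrix.mul_assoc, blockDiagonal'_mul_blockCol,
      transpose_blockCol_mul_blockCol]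
    simp [T, hnorm]
  rw [show S = _ from of_blocks_eq_blockDiagonal'_add_blockCol_mul Sig β Φ,
    det_add_mul_mul_of_mul_inv_mul_eq_one hD _ _ _ hBDB, add_sub_cancel, det_blockDiagonal',
    mul_comm]

/-- Determinant decomposition for the dynamic probabilistic CCA marginal covariance:
if `S` has blocks `S_{ij} = β_i Σ_{ij} β_jᵀ + δ_{ij} Φ_i`, where `Σ` is symmetric positive
definite with unit diagonal, each `Φ_i` is positive semidefinite, each diagonal block
`S_{ii} = β_iβ_iᵀ + Φ_i` is positive definite and `β_iᵀ S_{ii}⁻¹ β_i = 1`, then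
`det S = det Σ · ∏ i det S_{ii}`. -/
theorem stmt6 {m : ℕ} {d : Fin m → ℕ}
    (Sig : Matrix (Fin m) (Fin m) ℝ) (hSig : Sig.PosDef) (hdiag : ∀ i, Sig i i = 1)
    (β : (i : Fin m) → Fin (d i) → ℝ)
    (Φ : (i : Fin m) → Matrix (Fin (d i)) (Fin (d i)) ℝ)
    (hΦ : ∀ i, (Φ i).PosSemidef)
    (hSii : ∀ i, (vecMulVec (β i) (β i) + Φ i).PosDef)
    (hnorm : ∀ i, β i ⬝ᵥ (vecMulVec (β i) (β i) + Φ i)⁻¹ *ᵥ β i = 1) :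
    let S : Matrix ((i : Fin m) × Fin (d i)) ((i : Fin m) × Fin (d i)) ℝ :=
      Matrix.of fun p q =>
        β p.1 p.2 * Sig p.1 q.1 * β q.1 q.2 +
          (if h : p.1 = q.1 then Φ p.1 p.2 (Fin.cast (congrArg d h.symm) q.2) else 0)
    S.det = Sig.det * ∏ i, (vecMulVec (β i) (β i) + Φ i).det :=
  stmt6_general Sig β Φ hSii hnorm
end
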